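/- arXiv:2201.09885 — 5 statements merged into one kernel-verified Lean document; each statement's English description precedes it below -/
import Mathlib

section
/- Let B be a unital C*-algebra, let ζ be a complex number with |ζ| = 1, let d = (d_1,…,d_n) ∈ ℤⁿ, and let a_{ij}, b_{ij} ∈ B (1 ≤ i,j ≤ n) satisfy the graded commutation relations b_{kl} a_{ij} = ζ^{(d_l−d_k)(d_j−d_i)} a_{ij} b_{kl} for all i,j,k,l. Let U_{ij} = Σ_{k=1}^n a_{ik} b_{kj}. Then for all i,j one has ζ^{d_i(d_j−d_i)} U*_{ij} = Σ_{k=1}^n (ζ^{d_i(d_k−d_i)} a*_{ik}) (ζ^{d_k(d_j−d_k)} b*_{kj}); equivalently, writing Ū_ζ, ā_ζ, b̄_ζ for the ζ-conjugate matrices of U = (U_{ij}), a = (a_{ij}), b = (b_{ij}), one has the matrix identity Ū_ζ = ā_ζ · b̄_ζ in M_n(B). (This is the computation showing that the ζ-conjugate of a braided representation is again a representation.) -/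
/-- graded commutation relations imply that the ζ-conjugate of the
"product" matrix `U i j = ∑ k, a i k * b k j` satisfies
`ζ^(dᵢ(dⱼ−dᵢ)) • (U i j)* = ∑ k, (ζ^(dᵢ(dₖ−dᵢ)) • (a i k)*) * (ζ^(dₖ(dⱼ−dₖ)) • (b k j)*)`. -/
theorem stmt1 {n : ℕ} {B : Type*} [CStarAlgebra B]
    (ζ : ℂ) (hζ : ‖ζ‖ = 1) (d : Fin n → ℤ)
    (a b : Fin n → Fin n → B)
    (hab : ∀ i j k l, b k l * a i j = ζ ^ ((d l - d k) * (d j - d i)) • (a i j * b k l))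
    (U : Fin n → Fin n → B)
    (hU : ∀ i j, U i j = ∑ k, a i k * b k j) :
    ∀ i j, ζ ^ (d i * (d j - d i)) • star (U i j) =
      ∑ k, (ζ ^ (d i * (d k - d i)) • star (a i k)) *
        (ζ ^ (d k * (d j - d k)) • star (b k j)) := by
  have hζ0 : ζ ≠ 0 := by
    intro h; rw [h, norm_zero] at hζ; exact one_ne_zero hζ.symm
  have hζζ : ζ * star ζ = 1 := by
    rw [Complex.star_def, Complex.mul_conj']
    norm_cast
    rw [hζ]; norm_num
  intro i j
  rw [hU, star_sum, Finset.smul_sum]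
  refine Finset.sum_congr rfl fun k _ => ?_
  have h1 := congrArg star (hab i k k j)
  rw [star_mul, star_smul, star_mul,
    star_zpow₀] at h1
  have h2 : star (b k j) * star (a i k) =
      ζ ^ ((d j - d k) * (d k - d i)) • (star (a i k) * star (b k j)) := by
    rw [h1, smul_smul, ← mul_zpow, hζζ, one_zpow, one_smul]
  rw [star_mul, h2, smul_smul, smul_mul_smul_comm, ← zpow_add₀ hζ0,
    ← zpow_add₀ hζ0]
  congr 1
  ring
end

section
/- Let B be a unital C*-algebra, let ζ be a complex number with |ζ| = 1, let d = (d_1,…,d_n) ∈ ℤⁿ, let a_{ij}, b_{ij} ∈ B (1 ≤ i,j ≤ n) satisfy the graded commutation relations b_{kl} a_{ij} = ζ^{(d_l−d_k)(d_j−d_i)} a_{ij} b_{kl} for all i,j,k,l, and let F ∈ GL(n,ℂ) with inverse F⁻¹. Set U_{ij} = Σ_{k=1}^n a_{ik} b_{kj}. Then, with scalar matrices acting on M_n(B) via the algebra map ℂ → B, the matrix F Ū_ζ F⁻¹ equals the product (F ā_ζ F⁻¹)·(F b̄_ζ F⁻¹) in M_n(B), i.e. (F Ū_ζ F⁻¹)_{ij}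 = Σ_{l=1}^n (F ā_ζ F⁻¹)_{il} (F b̄_ζ F⁻¹)_{lj} for all i,j. (This is the computation in the construction of the comultiplication of the braided free unitary quantum group showing Δ(u′_{ij}) = Σ_l j₁(u′_{il}) j₂(u′_{lj}) for u′ = F ū_ζ F⁻¹.) -/
/-! Taking adjoints in the relation `b k j * a i k = ζ ^ m • (a i k * b k j)` and using
`conj ζ = ζ⁻¹` shows that `ζ`-conjugation is multiplicative on products of matrices with graded
commuting entries; the phases match because `dᵢ(dⱼ - dᵢ) + (dⱼ - dₖ)(dₖ - dᵢ) =
dᵢ(dₖ - dᵢ) + dₖ(dⱼ - dₖ)`. Conjugation by the image of `F` is multiplicative since `F⁻¹ F = 1`. -/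

/-- The ζ-conjugate matrix `q̄_ζ`, defined entrywise by
`(q̄_ζ) i j = ζ^(dᵢ(dⱼ−dᵢ)) • (q i j)*`. -/
noncomputable def zetaConj {n : ℕ} {B : Type*} [Ring B] [StarRing B] [Module ℂ B]
    (ζ : ℂ) (d : Fin n → ℤ) (q : Matrix (Fin n) (Fin n) B) : Matrix (Fin n) (Fin n) B :=
  Matrix.of fun i j => ζ ^ (d i * (d j - d i)) • star (q i j)

section

variable {B : Type*} [Ring B] [StarRing B] [Algebra ℂ B] [StarModule ℂ B] {ζ : ℂ}

lemma star_mul_of_mul_comm_zpow_smul (hζ : ‖ζ‖ = 1) {x y : B} {m : ℤ}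
    (h : y * x = ζ ^ m • (x * y)) : star (x * y) = ζ ^ m • (star x * star y) := by
  have hζ0 : ζ ≠ 0 := by rintro rfl; simp at hζ
  have hstar : star x * star y = ζ ^ (-m) • star (x * y) := by
    rw [← star_mul, h, star_smul, Complex.star_def, map_zpow₀, ← Complex.inv_eq_conj hζ,
      inv_zpow, zpow_neg]
  rw [hstar, smul_smul, ← zpow_add₀ hζ0, add_neg_cancel, zpow_zero, one_smul]

lemma zetaConj_mul_of_graded_comm {n : ℕ} (hζ : ‖ζ‖ = 1) (d : Fin n → ℤ)
    {a b : Matrix (Fin n) (Fin n) B}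
    (hab : ∀ i j k l, b k l * a i j = ζ ^ ((d l - d k) * (d j - d i)) • (a i j * b k l)) :
    zetaConj ζ d (a * b) = zetaConj ζ d a * zetaConj ζ d b := by
  have hζ0 : ζ ≠ 0 := by rintro rfl; simp at hζ
  ext i j
  simp only [zetaConj, Matrix.mul_apply, Matrix.of_apply, star_sum, Finset.smul_sum]
  refine Finset.sum_congr rfl fun k _ => ?_
  rw [star_mul_of_mul_comm_zpow_smul hζ (hab i k k j), smul_smul, smul_mul_smul_comm,
    ← zpow_add₀ hζ0, ← zpow_add₀ hζ0]
  congr 2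
  ring

end

lemma mul_mul_mul_eq_of_mul_eq_one {M : Type*} [Monoid M] {p q : M} (h : q * p = 1) (x y : M) :
    p * x * q * (p * y * q) = p * (x * y) * q := by
  simp only [mul_assoc]
  rw [← mul_assoc q p, h, one_mul]

/-- under the graded commutation relations, for an invertible scalar matrix
`F ∈ GL(n, ℂ)` one has `F Ū_ζ F⁻¹ = (F ā_ζ F⁻¹) * (F b̄_ζ F⁻¹)` in `Mₙ(B)`,
where `U i j = ∑ k, a i k * b k j`. -/
theorem stmt2 {n : ℕ} {B : Type*} [CStarAlgebra B]
    (ζ : ℂ) (hζ : ‖ζ‖ = 1) (d : Fin n → ℤ)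
    (a b : Fin n → Fin n → B)
    (hab : ∀ i j k l, b k l * a i j = ζ ^ ((d l - d k) * (d j - d i)) • (a i j * b k l))
    (F : Matrix (Fin n) (Fin n) ℂ) (hF : IsUnit F)
    (U : Matrix (Fin n) (Fin n) B)
    (hU : ∀ i j, U i j = ∑ k, a i k * b k j) :
    F.map (algebraMap ℂ B) * zetaConj ζ d U * (F⁻¹).map (algebraMap ℂ B) =
      (F.map (algebraMap ℂ B) * zetaConj ζ d (Matrix.of a) * (F⁻¹).map (algebraMap ℂ B)) *
      (F.map (algebraMap ℂ B) * zetaConj ζ d (Matrix.of b) * (F⁻¹).map (algebraMap ℂ B)) := by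
  have hUab : U = Matrix.of a * Matrix.of b := Matrix.ext fun i j => hU i j
  have hinv : (F⁻¹).map (algebraMap ℂ B) * F.map (algebraMap ℂ B) = 1 := by
    rw [← Matrix.map_mul, Matrix.nonsing_inv_mul F ((Matrix.isUnit_iff_isUnit_det F).mp hF),
      Matrix.map_one _ (map_zero _) (map_one _)]
  rw [mul_mul_mul_eq_of_mul_eq_one hinv, hUab,
    zetaConj_mul_of_graded_comm (a := .of a) (b := .of b) hζ d hab]
end

section
/- Let B be a unital C*-algebra, let ζ be a complex number with |ζ| = 1, let d = (d_1,…,d_n) ∈ ℤⁿ, and suppose s_1,…,s_n ∈ B satisfy the Cuntz relations s_i* s_j = δ_{ij}·1 (for all i,j) and Σ_{i=1}^n s_i s_i* = 1. Let q = (q_{ij}) ∈ M_n(B) be a unitary matrix (q*q = qq* = 1 for the conjugate-transpose star) whose entries satisfy the graded commutation relations q_{ij} s_k = ζ^{(d_j−d_i)d_k} s_k q_{ij} and q_{ij} s_k* = ζ^{−(d_j−d_i)d_k} s_k* q_{ij} for all i,j,k. Then the elements S_j = Σ_{i=1}^n s_i q_{ij} again satisfy the Cuntz relations: S_i* S_j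 = δ_{ij}·1 for all i,j, and Σ_{j=1}^n S_j S_j* = 1. (This is the computation showing that the braided free unitary quantum group acts linearly on the Cuntz algebra O_n.) -/
open scoped Matrix

/-- if `s₁,…,sₙ` is a Cuntz family in a unital C*-algebra `B` and
`q ∈ Mₙ(B)` is a unitary matrix whose entries satisfy the graded commutation relations with
the `sᵢ` and their adjoints, then `S j = ∑ i, s i * q i j` is again a Cuntz family. -/
theorem stmt8 {n : ℕ} {B : Type*} [CStarAlgebra B]
    (ζ : ℂ) (hζ : ‖ζ‖ = 1) (d : Fin n → ℤ)
    (s : Fin n → B)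
    (hs1 : ∀ i j, star (s i) * s j = if i = j then (1 : B) else 0)
    (hs2 : ∑ i, s i * star (s i) = 1)
    (q : Matrix (Fin n) (Fin n) B)
    (hq1 : qᴴ * q = 1) (hq2 : q * qᴴ = 1)
    (hqs : ∀ i j k, q i j * s k = ζ ^ ((d j - d i) * d k) • (s k * q i j))
    (hqs' : ∀ i j k, q i j * star (s k) = ζ ^ (-((d j - d i) * d k)) • (star (s k) * q i j))
    (S : Fin n → B) (hS : ∀ j, S j = ∑ i, s i * q i j) :
    (∀ i j, star (S i) * S j = if i = j then (1 : B) else 0) ∧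
    ∑ j, S j * star (S j) = 1 := by
  constructor
  · intro i j
    have h1 : star (S i) * S j
        = ∑ k, ∑ l, star (q k i) * ((star (s k) * s l) * q l j) := by
      rw [hS, hS, star_sum, Finset.sum_mul_sum]
      refine Finset.sum_congr rfl fun k _ => Finset.sum_congr rfl fun l _ => ?_
      simp [star_mul, mul_assoc]
    rw [h1]
    have h2 : ∀ k, ∑ l, star (q k i) * ((star (s k) * s l) * q l j)
        = star (q k i) * q k j := by
      intro k
      rw [Finset.sum_eq_single k]
      · rw [hs1]; simp
      · intro l _ hl; rw [hs1]; simp [Ne.symm hl]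
      · simp
    simp_rw [h2]
    have := congrFun (congrFun hq1 i) j
    simpa [Matrix.mul_apply, Matrix.conjTranspose_apply, Matrix.one_apply] using this
  · have h1 : ∑ j, S j * star (S j)
        = ∑ k, ∑ l, s k * (∑ j, q k j * star (q l j)) * star (s l) := by
      simp_rw [hS, star_sum, Finset.sum_mul_sum, star_mul, Finset.mul_sum,
        Finset.sum_mul]
      rw [Finset.sum_comm]
      refine Finset.sum_congr rfl fun k _ => ?_
      rw [Finset.sum_comm]
      refine Finset.sum_congr rfl fun l _ => Finset.sum_congr rfl fun j _ => ?_
      simp [mul_assoc]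
    rw [h1]
    have h2 : ∀ k l, (∑ j, q k j * star (q l j)) = if k = l then (1 : B) else 0 := by
      intro k l
      have := congrFun (congrFun hq2 k) l
      simpa [Matrix.mul_apply, Matrix.conjTranspose_apply, Matrix.one_apply] using this
    simp_rw [h2]
    have h3 : ∀ k, ∑ l, (s k * if k = l then (1 : B) else 0) * star (s l)
        = s k * star (s k) := by
      intro k
      rw [Finset.sum_eq_single k]
      · simp
      · intro l _ hl; simp [Ne.symm hl]
      · simp
    simp_rw [h3]
    exact hs2
end

section
/- Let A be a unital C*-algebra, let ζ be a complex number with |ζ| = 1, let d = (d_1,…,d_n) ∈ ℤⁿ, let z ∈ A be unitary, and let u_{ij} ∈ A (1 ≤ i,j ≤ n) satisfy z u_{ij} = ζ^{d_i−d_j} u_{ij} z for all i,j. Set t_{ij} = z^{d_i} u_{ij}. Then: (a) u*_{ij} z^{−d_i} = ζ^{d_i(d_j−d_i)} z^{−d_i} u*_{ij} for all i,j; (b) the entrywise-adjoint matrix t̄ = (t*_{ij})_{ij} (no transpose) equals the matrix product diag(z^{−d_1},…,z^{−d_n}) · ū_ζ in M_n(A), where ū_ζ is the ζ-conjugate of u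 = (u_{ij}); and (c) if ū_ζ is invertible in M_n(A), then t̄ is invertible in M_n(A). (This is the computation showing that the bosonization of the braided free unitary quantum group is a compact matrix quantum group.) -/
theorem pow_mul_eq_smul_mul_pow {R A : Type*} [CommSemiring R] [Semiring A] [Algebra R A]
    {z a : A} {c : R} (h : z * a = c • (a * z)) (m : ℕ) :
    z ^ m * a = c ^ m • (a * z ^ m) := by
  induction m with
  | zero => simp
  | succ m ih =>
    rw [pow_succ, mul_assoc, h, mul_smul_comm, ← mul_assoc, ih, smul_mul_assoc, smul_smul,
      mul_assoc, ← pow_succ', ← pow_succ]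

section Field

variable {𝕜 A : Type*} [Field 𝕜] [Ring A] [Algebra 𝕜 A] {a : A} {c : 𝕜}

theorem Units.inv_mul_eq_smul_mul_inv {z : Aˣ} (hc : c ≠ 0) (h : z * a = c • (a * z)) :
    (↑z⁻¹ : A) * a = c⁻¹ • (a * ↑z⁻¹) := by
  have hinv : a * ↑z⁻¹ = c • (↑z⁻¹ * a) :=
    calc a * ↑z⁻¹ = ↑z⁻¹ * (z * a) * ↑z⁻¹ := by rw [Units.inv_mul_cancel_left]
      _ = c • (↑z⁻¹ * a) := by
        rw [h, mul_smul_comm, smul_mul_assoc, mul_assoc, mul_assoc, Units.mul_inv, mul_one]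
  rw [hinv, smul_smul, inv_mul_cancel₀ hc, one_smul]

theorem Units.zpow_mul_eq_smul_mul_zpow {z : Aˣ} (hc : c ≠ 0) (h : z * a = c • (a * z))
    (k : ℤ) : ((z ^ k : Aˣ) : A) * a = c ^ k • (a * ↑(z ^ k)) := by
  cases k with
  | ofNat m => simpa using pow_mul_eq_smul_mul_pow h m
  | negSucc m =>
    rw [zpow_negSucc, zpow_negSucc, ← inv_pow, ← inv_pow]
    simpa using pow_mul_eq_smul_mul_pow (Units.inv_mul_eq_smul_mul_inv hc h) (m + 1)

theorem Unitary.zpow_mul_eq_smul_mul_zpow [StarMul A] {z : unitary A} (hc : c ≠ 0)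
    (h : z * a = c • (a * z)) (k : ℤ) :
    ((z ^ k : unitary A) : A) * a = c ^ k • (a * ↑(z ^ k)) := by
  simpa [← map_zpow] using Units.zpow_mul_eq_smul_mul_zpow (z := Unitary.toUnits z) hc h k

end Field

theorem Unitary.star_coe_zpow {A : Type*} [Monoid A] [StarMul A] (z : unitary A) (k : ℤ) :
    star ((z ^ k : unitary A) : A) = ((z ^ (-k) : unitary A) : A) := by
  rw [← Unitary.coe_star, Unitary.star_eq_inv, ← zpow_neg]

theorem Unitary.star_mul_zpow_neg_eq_smul {A : Type*} [Ring A] [StarRing A] [Algebra ℂ A]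
    [StarModule ℂ A] {z : unitary A} {a : A} {c : ℂ} (hc : ‖c‖ = 1)
    (h : z * a = c • (a * z)) (k : ℤ) :
    star a * ((z ^ (-k) : unitary A) : A) = c ^ (-k) • (((z ^ (-k) : unitary A) : A) * star a) := by
  have hc0 : c ≠ 0 := by
    rintro rfl
    simp at hc
  have hstar := congrArg star (Unitary.zpow_mul_eq_smul_mul_zpow hc0 h k)
  rwa [star_mul, star_smul, star_mul, Unitary.star_coe_zpow, Complex.star_def, map_zpow₀,
    ← Complex.inv_eq_conj hc, inv_zpow'] at hstar

theorem Matrix.isUnit_diagonal_of_forall_isUnit {ι α : Type*} [Fintype ι] [DecidableEq ι]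
    [Semiring α] {v : ι → α} (hv : ∀ i, IsUnit (v i)) : IsUnit (Matrix.diagonal v) :=
  (Pi.isUnit_iff.mpr hv).map (Matrix.diagonalRingHom ι α)

theorem diagonal_mul_zetaConj_apply {n : ℕ} {B : Type*} [Ring B] [StarRing B] [Algebra ℂ B]
    (w : Fin n → B) (ζ : ℂ) (d : Fin n → ℤ) (q : Matrix (Fin n) (Fin n) B) (i j : Fin n) :
    (Matrix.diagonal w * zetaConj ζ d q) i j = ζ ^ (d i * (d j - d i)) • (w i * star (q i j)) := by
  rw [Matrix.diagonal_mul, zetaConj, Matrix.of_apply, mul_smul_comm]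

/-- for a unitary `z` with `z u_{ij} = ζ^(dᵢ−dⱼ) u_{ij} z` and
`t_{ij} = z^(dᵢ) u_{ij}`: (a) `u*_{ij} z^(−dᵢ) = ζ^(dᵢ(dⱼ−dᵢ)) • (z^(−dᵢ) u*_{ij})`;
(b) the entrywise-adjoint matrix `t̄` equals `diag(z^(−d₁),…,z^(−dₙ)) · ū_ζ`;
(c) if `ū_ζ` is invertible in `Mₙ(A)`, so is `t̄`. -/
theorem stmt10 {n : ℕ} {A : Type*} [CStarAlgebra A]
    (ζ : ℂ) (hζ : ‖ζ‖ = 1) (d : Fin n → ℤ)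
    (z : unitary A)
    (u : Matrix (Fin n) (Fin n) A)
    (hzu : ∀ i j, (z : A) * u i j = ζ ^ (d i - d j) • (u i j * (z : A)))
    (t : Matrix (Fin n) (Fin n) A)
    (ht : ∀ i j, t i j = ((z ^ d i : unitary A) : A) * u i j)
    (tbar : Matrix (Fin n) (Fin n) A)
    (htbar : ∀ i j, tbar i j = star (t i j)) :
    (∀ i j, star (u i j) * ((z ^ (-d i) : unitary A) : A) =
        ζ ^ (d i * (d j - d i)) • (((z ^ (-d i) : unitary A) : A) * star (u i j))) ∧
    tbar = (Matrix.diagonal fun i => ((z ^ (-d i) : unitary A) : A)) * zetaConj ζ d u ∧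
    (IsUnit (zetaConj ζ d u) → IsUnit tbar) := by
  have parta : ∀ i j, star (u i j) * ((z ^ (-d i) : unitary A) : A) =
      ζ ^ (d i * (d j - d i)) • (((z ^ (-d i) : unitary A) : A) * star (u i j)) := by
    intro i j
    have hc : ‖ζ ^ (d i - d j)‖ = 1 := by rw [norm_zpow, hζ, one_zpow]
    rw [Unitary.star_mul_zpow_neg_eq_smul hc (hzu i j), ← zpow_mul]
    ring_nf
  have partb : tbar = (Matrix.diagonal fun i => ((z ^ (-d i) : unitary A) : A)) *
      zetaConj ζ d u := by
    ext i j
    rw [htbar, ht, star_mul, Unitary.star_coe_zpow, parta, diagonal_mul_zetaConj_apply]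
  refine ⟨parta, partb, fun hu => partb ▸ ?_⟩
  exact (Matrix.isUnit_diagonal_of_forall_isUnit fun _ => Unitary.isUnit_coe).mul hu
end

section
/- Let A be a C*-algebra (over ℂ) equipped with an action of the circle group 𝕋 by *-automorphisms, i.e. a group homomorphism ρ from 𝕋 to the group of *-automorphisms of A such that for each a ∈ A the map z ↦ ρ_z(a) is continuous. For n ∈ ℤ, let A(n) = { a ∈ A : ρ_z(a) = zⁿ·a for all z ∈ 𝕋 } be the spectral subspace of homogeneous elements of degree n (zⁿ acting by scalar multiplication via the inclusion 𝕋 ⊂ ℂ). Then the linear span of ⋃_{n∈ℤ} A(n) is norm-dense in A. -/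
/-!
By invariance of Haar measure, `∫ zⁿ • ρ_z a` is homogeneous of degree `-n`, so `∫ p z • ρ_z a`
lies in the span of the homogeneous elements for every trigonometric polynomial `p`.
The trigonometric polynomials `(1 + Re z)ᵏ` peak at `z = 1`, so their normalized integrals
against the continuous orbit `z ↦ ρ_z a` converge to `ρ_1 a = a`.
-/

open MeasureTheory Filter Set
open scoped Pointwise

noncomputable instance : MeasurableSpace Circle := borel Circle
instance : BorelSpace Circle := ⟨rfl⟩

namespace Circle

lemma continuous_coe_zpow (n : ℤ) : Continuous fun z : Circle => (z : ℂ) ^ n :=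
  continuous_subtype_val.zpow₀ n fun z => Or.inl (coe_ne_zero z)

noncomputable def monomial (n : ℤ) : C(Circle, ℂ) :=
  ⟨fun z => (z : ℂ) ^ n, continuous_coe_zpow n⟩

@[simp] lemma monomial_apply (n : ℤ) (z : Circle) : monomial n z = (z : ℂ) ^ n := rfl

lemma monomial_add (m n : ℤ) : monomial (m + n) = monomial m * monomial n := by
  ext z; simp [zpow_add₀ (coe_ne_zero z)]

lemma monomial_zero : monomial 0 = 1 := by ext z; simp

noncomputable def trigPolynomials : Subalgebra ℂ C(Circle, ℂ) :=
  (Submodule.span ℂ (range monomial)).toSubalgebra (Submodule.subset_span ⟨0, monomial_zero⟩)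
    fun x y hx hy => by
      have hmul : range monomial * range monomial ⊆ range monomial := by
        rintro _ ⟨_, ⟨m, rfl⟩, _, ⟨n, rfl⟩, rfl⟩
        exact ⟨m + n, monomial_add m n⟩
      have hxy := Submodule.mul_mem_mul hx hy
      rw [Submodule.span_mul_span] at hxy
      exact Submodule.span_le.2 (hmul.trans Submodule.subset_span) hxy

lemma mem_trigPolynomials {g : C(Circle, ℂ)} :
    g ∈ trigPolynomials ↔ g ∈ Submodule.span ℂ (range monomial) :=
  Submodule.mem_toSubalgebra

lemma monomial_mem_trigPolynomials (n : ℤ) : monomial n ∈ trigPolynomials :=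
  mem_trigPolynomials.2 (Submodule.subset_span ⟨n, rfl⟩)

lemma re_lt_one_of_ne_one {z : Circle} (hz : z ≠ 1) : (z : ℂ).re < 1 := by
  refine (Complex.re_le_norm (z : ℂ)).trans_eq (norm_coe z) |>.lt_of_ne fun hre => hz ?_
  have him : (z : ℂ).im = 0 := by
    have := normSq_coe z
    rw [Complex.normSq_apply, hre] at this
    nlinarith
  exact coe_eq_one.1 (Complex.ext hre him)

lemma neg_one_le_re (z : Circle) : -1 ≤ (z : ℂ).re :=
  (abs_le.1 ((Complex.abs_re_le_norm (z : ℂ)).trans_eq (norm_coe z))).1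

noncomputable def onePlusRe : C(Circle, ℂ) := 1 + (2⁻¹ : ℂ) • (monomial 1 + monomial (-1))

lemma onePlusRe_apply (z : Circle) : onePlusRe z = ((1 + (z : ℂ).re : ℝ) : ℂ) := by
  have hinv : (z : ℂ)⁻¹ = starRingEnd ℂ z := by rw [← coe_inv, coe_inv_eq_conj]
  simp only [onePlusRe, ContinuousMap.add_apply, ContinuousMap.one_apply, ContinuousMap.smul_apply,
    monomial_apply, zpow_one, zpow_neg, hinv, Complex.add_conj, smul_eq_mul]
  push_cast
  ring

lemma onePlusRe_mem_trigPolynomials : onePlusRe ∈ trigPolynomials :=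
  add_mem (one_mem _) <| Subalgebra.smul_mem _
    (add_mem (monomial_mem_trigPolynomials 1) (monomial_mem_trigPolynomials (-1))) _

end Circle

open Circle Measure

section

variable {E : Type*} [NormedAddCommGroup E] [NormedSpace ℂ E] [CompleteSpace E]

def IsHomogeneous (ρ : Circle →* (E →L[ℂ] E)) (n : ℤ) (a : E) : Prop :=
  ∀ z, ρ z a = (z : ℂ) ^ n • a

variable (ρ : Circle →* (E →L[ℂ] E)) {a : E}

theorem isHomogeneous_integral_zpow_smul (ha : Continuous fun z => ρ z a) (n : ℤ) :
    IsHomogeneous ρ (-n) (∫ z : Circle, (z : ℂ) ^ n • ρ z a ∂haar) := by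
  intro w
  have hint : Integrable (fun z : Circle => (z : ℂ) ^ n • ρ z a) haar :=
    ((continuous_coe_zpow n).smul ha).integrable_of_hasCompactSupport (.of_compactSpace _)
  calc ρ w (∫ z : Circle, (z : ℂ) ^ n • ρ z a ∂haar)
      = ∫ z : Circle, (z : ℂ) ^ n • ρ (w * z) a ∂haar := by
        rw [← (ρ w).integral_comp_comm hint]
        simp only [map_smul, map_mul, mul_apply_eq_comp]
    _ = ∫ z : Circle, ((w⁻¹ * z : Circle) : ℂ) ^ n • ρ (w * (w⁻¹ * z)) a ∂haar :=
        (integral_mul_left_eq_self (fun z : Circle => (z : ℂ) ^ n • ρ (w * z) a) w⁻¹).symm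
    _ = ∫ z : Circle, (w : ℂ) ^ (-n) • (z : ℂ) ^ n • ρ z a ∂haar := by
        congr 1 with z
        rw [mul_inv_cancel_left, smul_smul, coe_mul, coe_inv, mul_zpow, inv_zpow, zpow_neg]
    _ = (w : ℂ) ^ (-n) • ∫ z : Circle, (z : ℂ) ^ n • ρ z a ∂haar := integral_smul _ _

theorem integral_smul_mem_span_isHomogeneous (ha : Continuous fun z => ρ z a)
    {g : C(Circle, ℂ)} (hg : g ∈ trigPolynomials) :
    ∫ z, g z • ρ z a ∂haar ∈ Submodule.span ℂ {b | ∃ n, IsHomogeneous ρ n b} := by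
  have hint (g : C(Circle, ℂ)) : Integrable (fun z => g z • ρ z a) haar :=
    (g.continuous.smul ha).integrable_of_hasCompactSupport (.of_compactSpace _)
  rw [mem_trigPolynomials] at hg
  induction hg using Submodule.span_induction with
  | mem g hg =>
    obtain ⟨n, rfl⟩ := hg
    exact Submodule.subset_span ⟨-n, isHomogeneous_integral_zpow_smul ρ ha n⟩
  | zero => simp
  | add g h _ _ hg hh =>
    simpa only [ContinuousMap.add_apply, add_smul, integral_add (hint g) (hint h)] using
      add_mem hg hh
  | smul c g _ hg =>
    simpa only [ContinuousMap.smul_apply, smul_assoc, integral_smul] using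
      Submodule.smul_mem _ c hg

theorem dense_span_isHomogeneous (hρ : ∀ a, Continuous fun z => ρ z a) :
    Dense (Submodule.span ℂ {b | ∃ n, IsHomogeneous ρ n b} : Set E) := by
  intro a
  have hc : Continuous fun z : Circle => 1 + (z : ℂ).re :=
    continuous_const.add (Complex.continuous_re.comp continuous_subtype_val)
  have hpeak := tendsto_setIntegral_pow_smul_of_unique_maximum_of_isCompact_of_continuousOn
    (μ := haar) (x₀ := (1 : Circle)) isCompact_univ hc.continuousOn
    (fun z _ hz => by simpa using re_lt_one_of_ne_one hz)
    (fun z _ => by linarith [neg_one_le_re z])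
    (by norm_num) (by simp) (hρ a).continuousOn
  simp only [Measure.restrict_univ, map_one, one_apply_eq_self] at hpeak
  refine mem_closure_of_tendsto hpeak (Eventually.of_forall fun n => ?_)
  have hpow : ∫ z : Circle, (1 + (z : ℂ).re) ^ n • ρ z a ∂haar =
      ∫ z : Circle, (onePlusRe ^ n) z • ρ z a ∂haar := by
    congr 1 with z
    rw [ContinuousMap.pow_apply, onePlusRe_apply, ← Complex.ofReal_pow, Complex.coe_smul]
  rw [SetLike.mem_coe, hpow]
  exact Submodule.smul_of_tower_mem _ _
    (integral_smul_mem_span_isHomogeneous ρ (hρ a) (pow_mem onePlusRe_mem_trigPolynomials n))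

end

noncomputable def StarAlgEquiv.toContinuousLinearMapHom {A : Type*} [NonUnitalCStarAlgebra A] :
    (A ≃⋆ₐ[ℂ] A) →* (A →L[ℂ] A) where
  toFun e := ⟨(e : A →ₗ[ℂ] A), (StarAlgEquiv.isometry e).continuous⟩
  map_one' := rfl
  map_mul' _ _ := rfl

/-- for a (pointwise continuous) action `ρ` of the circle group on a
C*-algebra `A` by *-automorphisms, the linear span of the homogeneous elements
(those `a` with `ρ z a = zⁿ • a` for some `n ∈ ℤ` and all `z`) is norm-dense in `A`. -/
theorem stmt12 {A : Type*} [NonUnitalCStarAlgebra A]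
    (ρ : Circle → (A ≃⋆ₐ[ℂ] A))
    (hρmul : ∀ z w : Circle, ∀ a : A, ρ (z * w) a = ρ z (ρ w a))
    (hcont : ∀ a : A, Continuous fun z : Circle => ρ z a) :
    Dense (↑(Submodule.span ℂ
      {a : A | ∃ n : ℤ, ∀ z : Circle, ρ z a = (z : ℂ) ^ n • a}) : Set A) :=
  -- `ρ 1 = 1` comes for free from `MonoidHom.mk'`, as `A ≃⋆ₐ[ℂ] A` is a group.
  dense_span_isHomogeneous (StarAlgEquiv.toContinuousLinearMapHom.comp
    (MonoidHom.mk' ρ fun z w => StarAlgEquiv.ext (hρmul z w))) hcont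
end
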